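/- Fix a capacity m ∈ ℕ, protected type P = 1, and a protection level x ∈ ℕ with x ≤ m. For every arrival list I containing exactly n₁ type-1 entries and n₂ type-2 entries, the final accepted counts of the protection-level policy on I satisfy a₂ ≤ min{n₂, m − x} and a₁ ≥ min{n₁, m − min{n₂, m − x}}. -/
import Mathlib


inductive AgentType : Type
  | one : AgentType
  | two : AgentType
deriving DecidableEq

/-- One step of the protection-level policy with capacity `m`, protected type
`P` and protection level `x`: given current accepted counts `(a₁, a₂)` and an
arriving agent of type `t`, a protected-type agent is accepted iff
`a₁ + a₂ < m`, while an agent of the other type `Q` is accepted iff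
`a_Q < m - x` and `a₁ + a₂ < m`. -/
def stepPolicy (m : ℕ) (P : AgentType) (x : ℕ) (s : ℕ × ℕ) (t : AgentType) : ℕ × ℕ :=
  if t = P then
    if s.1 + s.2 < m then
      (if t = AgentType.one then (s.1 + 1, s.2) else (s.1, s.2 + 1))
    else s
  else
    if (if t = AgentType.one then s.1 else s.2) < m - x ∧ s.1 + s.2 < m then
      (if t = AgentType.one then (s.1 + 1, s.2) else (s.1, s.2 + 1))
    else s

/-- Final accepted counts `(a₁, a₂)` of the protection-level policy processing
the arrival list `I` from left to right, starting from `(0, 0)`. -/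
def runPolicy (m : ℕ) (P : AgentType) (x : ℕ) (I : List AgentType) : ℕ × ℕ :=
  I.foldl (stepPolicy m P x) (0, 0)

/-- Reward of the protection-level policy on arrival list `I` with per-agent
rewards `r₁` (type 1) and `r₂` (type 2). -/
noncomputable def policyReward (m : ℕ) (P : AgentType) (x : ℕ) (r₁ r₂ : ℝ)
    (I : List AgentType) : ℝ :=
  ((runPolicy m P x I).1 : ℝ) * r₁ + ((runPolicy m P x I).2 : ℝ) * r₂

lemma aux_counts (m x : ℕ) :
    ∀ (I : List AgentType) (s : ℕ × ℕ), s.2 ≤ m - x →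
      (I.foldl (stepPolicy m AgentType.one x) s).2
        ≤ min (s.2 + I.count AgentType.two) (m - x) ∧
      min (s.1 + I.count AgentType.one)
          (m - min (s.2 + I.count AgentType.two) (m - x))
        ≤ (I.foldl (stepPolicy m AgentType.one x) s).1 := by
  intro I
  induction I with
  | nil => intro s hs; simp; omega
  | cons t rest ih =>
    intro s hs
    cases t with
    | one =>
      simp only [List.foldl_cons, List.count_cons]
      by_cases h : s.1 + s.2 < m
      · have hstep : stepPolicy m AgentType.one x s AgentType.one = (s.1 + 1, s.2) := by
          simp [stepPolicy, h]
        rw [hstep]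
        have := ih (s.1 + 1, s.2) hs
        simp at this ⊢
        omega
      · have hstep : stepPolicy m AgentType.one x s AgentType.one = s := by
          simp [stepPolicy, h]
        rw [hstep]
        have := ih s hs
        simp at this ⊢
        omega
    | two =>
      simp only [List.foldl_cons, List.count_cons]
      by_cases h : s.2 < m - x ∧ s.1 + s.2 < m
      · have hstep : stepPolicy m AgentType.one x s AgentType.two = (s.1, s.2 + 1) := by
          simp [stepPolicy, h]
        rw [hstep]
        have := ih (s.1, s.2 + 1) (by omega)
        simp at this ⊢
        omega
      · have hstep : stepPolicy m AgentType.one x s AgentType.two = s := by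
          simp [stepPolicy]
          intro h1 h2; exact absurd ⟨h1, h2⟩ h
        rw [hstep]
        have := ih s hs
        simp at this ⊢
        omega

/-- Monotonicity claims (i)-(ii) in the proof of the paper's Lemma 1: on any
arrival list `I` with `n₁` type-1 and `n₂` type-2 agents, the protection-level
policy (protecting type 1 with level `x ≤ m`) accepts at most
`min n₂ (m - x)` type-2 agents and at least `min n₁ (m - min n₂ (m - x))`
type-1 agents. -/
theorem any_order_counts (m x n₁ n₂ : ℕ) (hx : x ≤ m) (I : List AgentType)
    (h1 : I.count AgentType.one = n₁) (h2 : I.count AgentType.two = n₂) :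
    (runPolicy m AgentType.one x I).2 ≤ min n₂ (m - x) ∧
    min n₁ (m - min n₂ (m - x)) ≤ (runPolicy m AgentType.one x I).1 := by
  have := aux_counts m x I (0, 0) (Nat.zero_le _)
  simp only [Prod.fst, Prod.snd, zero_add, h1, h2] at this
  simp only [runPolicy]
  exact this
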